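/- arXiv:0707.3345 — 5 statements merged into one kernel-verified Lean document; each statement's English description precedes it below -/
import Mathlib

section
/- For every matrix A in V with tr(A²) = 1 there exist g ∈ SO(3) and t ∈ [0, π/3] such that g A g⁻¹ = γ(t), and the parameter t with this property is unique. (This exhibits the orbit space of the conjugation action of SO(3) on the unit sphere of V as the interval [0, π/3].) -/
open Real Matrix

/-- `e₁ = diag(1,1,-2)/√6` -/
noncomputable def e1 : Matrix (Fin 3) (Fin 3) ℝ :=
  (1 / Real.sqrt 6) • !![1, 0, 0; 0, 1, 0; 0, 0, -2]

/-- `e₂ = diag(1,-1,0)/√2` -/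
noncomputable def e2 : Matrix (Fin 3) (Fin 3) ℝ :=
  (1 / Real.sqrt 2) • !![1, 0, 0; 0, -1, 0; 0, 0, 0]

/-- the normal geodesic `γ(t) = cos t · e₁ + sin t · e₂` -/
noncomputable def gam (t : ℝ) : Matrix (Fin 3) (Fin 3) ℝ :=
  Real.cos t • e1 + Real.sin t • e2

lemma gam_eq (t : ℝ) : gam t = Matrix.diagonal
    ![Real.cos t / Real.sqrt 6 + Real.sin t / Real.sqrt 2,
      Real.cos t / Real.sqrt 6 - Real.sin t / Real.sqrt 2,
      -2 * Real.cos t / Real.sqrt 6] := by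
  ext i j
  fin_cases i <;> fin_cases j <;>
    simp [gam, e1, e2, Matrix.diagonal, Matrix.vecHead, Matrix.vecTail] <;> ring

lemma trace_gam_cube (t : ℝ) :
    (gam t * gam t * gam t).trace = -Real.cos (3 * t) / Real.sqrt 6 := by
  have h6 : Real.sqrt 6 ^ 2 = 6 := Real.sq_sqrt (by norm_num)
  have h2 : Real.sqrt 2 ^ 2 = 2 := Real.sq_sqrt (by norm_num)
  have h60 : Real.sqrt 6 ≠ 0 := by positivity
  have h20 : Real.sqrt 2 ≠ 0 := by positivity
  have hu : ((Real.sqrt 6)⁻¹) ^ 2 = 1/6 := by rw [inv_pow, h6]; norm_num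
  have hv : ((Real.sqrt 2)⁻¹) ^ 2 = 1/2 := by rw [inv_pow, h2]; norm_num
  have hs : Real.sin t ^ 2 = 1 - Real.cos t ^ 2 := Real.sin_sq t
  have key : ∀ u v c s : ℝ, u^2 = 1/6 → v^2 = 1/2 → s^2 = 1 - c^2 →
      (c*u + s*v)*(c*u + s*v)*(c*u + s*v) + (c*u - s*v)*(c*u - s*v)*(c*u - s*v)
        + (-2*c*u)*(-2*c*u)*(-2*c*u) = -(4*c^3 - 3*c)*u := by
    intro u v c s hu hv hs
    linear_combination (-6*c^3*u)*hu + (6*c*u*s^2)*hv + (3*c*u)*hs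
  rw [gam_eq, Matrix.diagonal_mul_diagonal, Matrix.diagonal_mul_diagonal,
    Matrix.trace_diagonal, Real.cos_three_mul]
  simp only [Fin.sum_univ_three, Pi.mul_apply, Matrix.cons_val_zero, Matrix.cons_val_one,
    Matrix.head_cons, Matrix.cons_val_two, Matrix.tail_cons, div_eq_mul_inv]
  linear_combination key ((Real.sqrt 6)⁻¹) ((Real.sqrt 2)⁻¹) (Real.cos t) (Real.sin t) hu hv hs

lemma exists_param (a b c : ℝ) (hab : b ≤ a) (hbc : c ≤ b)
    (hsum : a + b + c = 0) (hsq : a ^ 2 + b ^ 2 + c ^ 2 = 1) :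
    ∃ t ∈ Set.Icc 0 (π / 3), gam t = Matrix.diagonal ![a, b, c] := by
  have h6 : Real.sqrt 6 ^ 2 = 6 := Real.sq_sqrt (by norm_num)
  have h2 : Real.sqrt 2 ^ 2 = 2 := Real.sq_sqrt (by norm_num)
  have h60 : (0:ℝ) < Real.sqrt 6 := by positivity
  have h20 : (0:ℝ) < Real.sqrt 2 := by positivity
  have hc0 : c ≤ 0 := by linarith
  have hab3 : a - b ≤ -3 * c := by linarith
  have habnn : 0 ≤ a - b := by linarith
  have hsq' : (a - b) ^ 2 = 2 - 3 * c ^ 2 := by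
    linear_combination 2 * hsq + (c - a - b) * hsum
  have h9 : (a - b) ^ 2 ≤ 9 * c ^ 2 := by nlinarith [hab3, habnn]
  have hc6 : 1 ≤ 6 * c ^ 2 := by linarith
  have hcub : c ^ 2 ≤ 2 / 3 := by nlinarith [sq_nonneg (a - b)]
  set x : ℝ := -(Real.sqrt 6) * c / 2 with hxdef
  -- √6 * (-c) = √(6 c²)
  have hsqc : Real.sqrt 6 * -c = Real.sqrt (6 * c ^ 2) := by
    rw [Real.sqrt_mul (by norm_num : (6:ℝ) ≥ 0) (c^2)]
    rw [Real.sqrt_sq_eq_abs, abs_of_nonpos hc0]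
  have hge : 1 ≤ Real.sqrt 6 * -c := by
    rw [hsqc]
    calc (1:ℝ) = Real.sqrt 1 := (Real.sqrt_one).symm
      _ ≤ Real.sqrt (6 * c ^ 2) := Real.sqrt_le_sqrt (by linarith)
  have hle : Real.sqrt 6 * -c ≤ 2 := by
    rw [hsqc]
    calc Real.sqrt (6 * c ^ 2) ≤ Real.sqrt 4 := Real.sqrt_le_sqrt (by linarith)
      _ = 2 := by rw [show (4:ℝ) = 2^2 by norm_num, Real.sqrt_sq]; norm_num
  have hx_half : 1 / 2 ≤ x := by rw [hxdef]; nlinarith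
  have hx_le1 : x ≤ 1 := by rw [hxdef]; nlinarith
  have hx_gem1 : -1 ≤ x := by linarith
  set t := Real.arccos x with htdef
  have hcos : Real.cos t = x := Real.cos_arccos hx_gem1 hx_le1
  have ht0 : 0 ≤ t := Real.arccos_nonneg x
  have htpi : t ≤ π / 3 := by
    by_contra h
    push_neg at h
    have h1 : Real.cos t < Real.cos (π / 3) :=
      Real.strictAntiOn_cos ⟨by positivity, by linarith [Real.pi_pos]⟩
        ⟨ht0, Real.arccos_le_pi x⟩ h
    rw [Real.cos_pi_div_three, hcos] at h1
    linarith
  have hx2 : 1 - x ^ 2 = ((a - b) / Real.sqrt 2) ^ 2 := by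
    rw [hxdef]
    field_simp
    linear_combination (4 - c^2 * Real.sqrt 6 ^ 2) * h2 - 2 * c^2 * h6 - 4 * hsq'
  have hsin : Real.sin t = (a - b) / Real.sqrt 2 := by
    rw [htdef, Real.sin_arccos, hx2, Real.sqrt_sq (by positivity)]
  refine ⟨t, ⟨ht0, htpi⟩, ?_⟩
  rw [gam_eq]
  have hv : ![Real.cos t / Real.sqrt 6 + Real.sin t / Real.sqrt 2,
      Real.cos t / Real.sqrt 6 - Real.sin t / Real.sqrt 2,
      -2 * Real.cos t / Real.sqrt 6] = ![a, b, c] := by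
    funext i
    fin_cases i <;>
      simp only [Fin.reduceFinMk, Fin.isValue, Matrix.cons_val_zero, Matrix.cons_val_one, Matrix.head_cons,
        Matrix.cons_val_two, Matrix.tail_cons] <;>
      simp only [hcos, hsin, hxdef] <;> field_simp <;>
      rw [h2] <;> linear_combination (-2) * hsum
  rw [hv]

section
variable (v : Fin 3 → ℝ)

lemma diag_lit (v : Fin 3 → ℝ) : Matrix.diagonal v = !![v 0, 0, 0; 0, v 1, 0; 0, 0, v 2] := by
  ext i j
  fin_cases i <;> fin_cases j <;>
    simp [Matrix.diagonal, Matrix.vecHead, Matrix.vecTail]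

lemma sort3 (v : Fin 3 → ℝ) :
    ∃ (a b c : ℝ) (P : Matrix (Fin 3) (Fin 3) ℝ), b ≤ a ∧ c ≤ b ∧
      a + b + c = v 0 + v 1 + v 2 ∧
      a ^ 2 + b ^ 2 + c ^ 2 = v 0 ^ 2 + v 1 ^ 2 + v 2 ^ 2 ∧
      P * Pᵀ = 1 ∧ P * Matrix.diagonal v * Pᵀ = Matrix.diagonal ![a, b, c] := by
  have hd := diag_lit v
  rcases le_total (v 0) (v 1) with h01 | h01 <;> rcases le_total (v 1) (v 2) with h12 | h12
  · -- v0 ≤ v1 ≤ v2 : (v2, v1, v0)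
    refine ⟨v 2, v 1, v 0, !![0,0,1; 0,1,0; 1,0,0], by linarith, by linarith, by ring, by ring,
      ?_, ?_⟩
    · ext i j; fin_cases i <;> fin_cases j <;>
        norm_num [Matrix.mul_apply, Fin.sum_univ_three, Matrix.one_apply, Fin.ext_iff, Matrix.transpose_apply,
          Matrix.vecHead, Matrix.vecTail, Matrix.cons_val_two, Matrix.tail_cons, Matrix.head_cons]
    · rw [hd, diag_lit]; ext i j; fin_cases i <;> fin_cases j <;>
        norm_num [Matrix.mul_apply, Fin.sum_univ_three, Matrix.transpose_apply,
          Matrix.vecHead, Matrix.vecTail, Matrix.cons_val_two, Matrix.tail_cons, Matrix.head_cons]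
  · rcases le_total (v 0) (v 2) with h02 | h02
    · -- v1 ≥ v2 ≥ v0
      refine ⟨v 1, v 2, v 0, !![0,1,0; 0,0,1; 1,0,0], by linarith, by linarith, by ring, by ring,
        ?_, ?_⟩
      · ext i j; fin_cases i <;> fin_cases j <;>
          norm_num [Matrix.mul_apply, Fin.sum_univ_three, Matrix.one_apply, Fin.ext_iff, Matrix.transpose_apply,
            Matrix.vecHead, Matrix.vecTail, Matrix.cons_val_two, Matrix.tail_cons, Matrix.head_cons]
      · rw [hd, diag_lit]; ext i j; fin_cases i <;> fin_cases j <;>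
          norm_num [Matrix.mul_apply, Fin.sum_univ_three, Matrix.transpose_apply,
            Matrix.vecHead, Matrix.vecTail, Matrix.cons_val_two, Matrix.tail_cons, Matrix.head_cons]
    · -- v1 ≥ v0 ≥ v2
      refine ⟨v 1, v 0, v 2, !![0,1,0; 1,0,0; 0,0,1], by linarith, by linarith, by ring, by ring,
        ?_, ?_⟩
      · ext i j; fin_cases i <;> fin_cases j <;>
          norm_num [Matrix.mul_apply, Fin.sum_univ_three, Matrix.one_apply, Fin.ext_iff, Matrix.transpose_apply,
            Matrix.vecHead, Matrix.vecTail, Matrix.cons_val_two, Matrix.tail_cons, Matrix.head_cons]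
      · rw [hd, diag_lit]; ext i j; fin_cases i <;> fin_cases j <;>
          norm_num [Matrix.mul_apply, Fin.sum_univ_three, Matrix.transpose_apply,
            Matrix.vecHead, Matrix.vecTail, Matrix.cons_val_two, Matrix.tail_cons, Matrix.head_cons]
  · -- v1 ≤ v0, v1 ≤ v2
    rcases le_total (v 0) (v 2) with h02 | h02
    · -- v2 ≥ v0 ≥ v1
      refine ⟨v 2, v 0, v 1, !![0,0,1; 1,0,0; 0,1,0], by linarith, by linarith, by ring, by ring,
        ?_, ?_⟩
      · ext i j; fin_cases i <;> fin_cases j <;>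
          norm_num [Matrix.mul_apply, Fin.sum_univ_three, Matrix.one_apply, Fin.ext_iff, Matrix.transpose_apply,
            Matrix.vecHead, Matrix.vecTail, Matrix.cons_val_two, Matrix.tail_cons, Matrix.head_cons]
      · rw [hd, diag_lit]; ext i j; fin_cases i <;> fin_cases j <;>
          norm_num [Matrix.mul_apply, Fin.sum_univ_three, Matrix.transpose_apply,
            Matrix.vecHead, Matrix.vecTail, Matrix.cons_val_two, Matrix.tail_cons, Matrix.head_cons]
    · -- v0 ≥ v2 ≥ v1
      refine ⟨v 0, v 2, v 1, !![1,0,0; 0,0,1; 0,1,0], by linarith, by linarith, by ring, by ring,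
        ?_, ?_⟩
      · ext i j; fin_cases i <;> fin_cases j <;>
          norm_num [Matrix.mul_apply, Fin.sum_univ_three, Matrix.one_apply, Fin.ext_iff, Matrix.transpose_apply,
            Matrix.vecHead, Matrix.vecTail, Matrix.cons_val_two, Matrix.tail_cons, Matrix.head_cons]
      · rw [hd, diag_lit]; ext i j; fin_cases i <;> fin_cases j <;>
          norm_num [Matrix.mul_apply, Fin.sum_univ_three, Matrix.transpose_apply,
            Matrix.vecHead, Matrix.vecTail, Matrix.cons_val_two, Matrix.tail_cons, Matrix.head_cons]
  · -- v0 ≥ v1 ≥ v2 : identity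
    refine ⟨v 0, v 1, v 2, 1, by linarith, by linarith, by ring, by ring, by simp, ?_⟩
    rw [Matrix.transpose_one, mul_one, one_mul, hd, diag_lit]
    norm_num [Matrix.cons_val_two, Matrix.tail_cons, Matrix.head_cons]

end

lemma fixdet (g : Matrix (Fin 3) (Fin 3) ℝ) (v : Fin 3 → ℝ) (h1 : g * gᵀ = 1) :
    ∃ g' : Matrix (Fin 3) (Fin 3) ℝ, g' * g'ᵀ = 1 ∧ g'.det = 1 ∧
      ∀ A : Matrix (Fin 3) (Fin 3) ℝ, g * A * gᵀ = Matrix.diagonal v →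
        g' * A * g'ᵀ = Matrix.diagonal v := by
  have hdet : g.det * g.det = 1 := by
    have := congrArg Matrix.det h1
    rwa [Matrix.det_mul, Matrix.det_transpose, Matrix.det_one] at this
  rcases mul_self_eq_one_iff.mp hdet with h | h
  · exact ⟨g, h1, h, fun A hA => hA⟩
  · set F : Matrix (Fin 3) (Fin 3) ℝ := Matrix.diagonal ![1, 1, -1] with hF
    have hFt : Fᵀ = F := Matrix.diagonal_transpose _
    have hFF : F * F = 1 := by
      rw [hF, Matrix.diagonal_mul_diagonal]
      ext i j
      fin_cases i <;> fin_cases j <;>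
        simp [Matrix.diagonal, Matrix.one_apply, Matrix.vecHead, Matrix.vecTail]
    have hFdet : F.det = -1 := by
      rw [hF, Matrix.det_diagonal, Fin.prod_univ_three]; norm_num [Matrix.cons_val_two, Matrix.tail_cons, Matrix.head_cons]
    refine ⟨F * g, ?_, ?_, ?_⟩
    · rw [Matrix.transpose_mul, hFt, mul_assoc, ← mul_assoc g, h1, one_mul, hFF]
    · rw [Matrix.det_mul, hFdet, h]; norm_num
    · intro A hA
      have key : F * g * A * (F * g)ᵀ = F * (g * A * gᵀ) * F := by
        rw [Matrix.transpose_mul, hFt]; noncomm_ring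
      rw [key, hA, hF, Matrix.diagonal_mul_diagonal, Matrix.diagonal_mul_diagonal]
      ext i j
      fin_cases i <;> fin_cases j <;>
        simp [Matrix.diagonal, Matrix.vecHead, Matrix.vecTail] <;> ring

lemma conj_mul_conj (g h A B : Matrix (Fin 3) (Fin 3) ℝ) (h2 : h * g = 1) :
    (g * A * h) * (g * B * h) = g * (A * B) * h := by
  have e : (g * A * h) * (g * B * h) = g * A * (h * g) * (B * h) := by
    simp only [Matrix.mul_assoc]
  rw [e, h2, mul_one]
  simp only [Matrix.mul_assoc]

lemma trace_cube_conj (A g : Matrix (Fin 3) (Fin 3) ℝ) (h1 : g * gᵀ = 1) :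
    ((g * A * gᵀ) * (g * A * gᵀ) * (g * A * gᵀ)).trace = (A * A * A).trace := by
  have h2 : gᵀ * g = 1 := mul_eq_one_comm.mp h1
  rw [conj_mul_conj g gᵀ A A h2, conj_mul_conj g gᵀ (A * A) A h2, Matrix.trace_mul_comm,
    ← Matrix.mul_assoc, h2, one_mul]

/-- Every symmetric traceless `3×3` matrix `A` with `tr(A²) = 1` is conjugate, by an
element of `SO(3)`, to `γ(t)` for a unique `t ∈ [0, π/3]`. -/
theorem orbit_space_of_conjugation_action (A : Matrix (Fin 3) (Fin 3) ℝ)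
    (hsym : Aᵀ = A) (htr : A.trace = 0) (hnorm : (A * A).trace = 1) :
    ∃! t : ℝ, t ∈ Set.Icc 0 (π / 3) ∧
      ∃ g : Matrix (Fin 3) (Fin 3) ℝ, g * gᵀ = 1 ∧ g.det = 1 ∧ g * A * g⁻¹ = gam t := by
  have hA : A.IsHermitian := by
    rw [Matrix.IsHermitian, Matrix.conjTranspose_eq_transpose_of_trivial, hsym]
  set U : Matrix (Fin 3) (Fin 3) ℝ := (hA.eigenvectorUnitary : Matrix (Fin 3) (Fin 3) ℝ)
    with hUdef
  set μ : Fin 3 → ℝ := hA.eigenvalues with hμdef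
  have hUmem := hA.eigenvectorUnitary.2
  have hUUt : U * Uᵀ = 1 := by
    have := Matrix.mem_unitaryGroup_iff.mp hUmem
    rwa [Matrix.star_eq_conjTranspose, Matrix.conjTranspose_eq_transpose_of_trivial] at this
  have hUtU : Uᵀ * U = 1 := mul_eq_one_comm.mp hUUt
  have hdiag : Uᵀ * A * U = Matrix.diagonal μ := by
    have := hA.conjStarAlgAut_star_eigenvectorUnitary
    rw [Unitary.conjStarAlgAut_star_apply] at this
    rwa [Matrix.star_eq_conjTranspose, Matrix.conjTranspose_eq_transpose_of_trivial,
      RCLike.ofReal_real_eq_id, Function.id_comp] at this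
  -- trace facts
  have htrμ : μ 0 + μ 1 + μ 2 = 0 := by
    have h1 : (Matrix.diagonal μ).trace = A.trace := by
      rw [← hdiag, Matrix.trace_mul_comm, ← Matrix.mul_assoc, hUUt, one_mul]
    rw [htr, Matrix.trace_diagonal, Fin.sum_univ_three] at h1
    linarith
  have hsqμ : μ 0 ^ 2 + μ 1 ^ 2 + μ 2 ^ 2 = 1 := by
    have h0 : Matrix.diagonal μ * Matrix.diagonal μ = Uᵀ * (A * A) * U := by
      rw [← hdiag, conj_mul_conj Uᵀ U A A hUUt]
    have h1 : (Matrix.diagonal μ * Matrix.diagonal μ).trace = (A * A).trace := by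
      rw [h0, Matrix.trace_mul_comm, ← Matrix.mul_assoc, hUUt, one_mul]
    rw [hnorm, Matrix.diagonal_mul_diagonal, Matrix.trace_diagonal, Fin.sum_univ_three] at h1
    nlinarith [h1]
  obtain ⟨a, b, c, P, hab, hbc, hsum', hsq', hPPt, hPconj⟩ := sort3 μ
  obtain ⟨t, htmem, hgamt⟩ := exists_param a b c hab hbc (by linarith) (by linarith [hsqμ, hsq'])
  -- the conjugating matrix
  have hg0 : (P * Uᵀ) * (P * Uᵀ)ᵀ = 1 := by
    rw [Matrix.transpose_mul, Matrix.transpose_transpose, Matrix.mul_assoc,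
      ← Matrix.mul_assoc Uᵀ, hUtU, one_mul, hPPt]
  have hg0conj : (P * Uᵀ) * A * (P * Uᵀ)ᵀ = Matrix.diagonal ![a, b, c] := by
    rw [Matrix.transpose_mul, Matrix.transpose_transpose, ← hPconj, ← hdiag]
    simp only [Matrix.mul_assoc]
  obtain ⟨g, hggt, hgdet, hgconj⟩ := fixdet (P * Uᵀ) ![a, b, c] hg0
  have hgA := hgconj A hg0conj
  have hginv : g⁻¹ = gᵀ := Matrix.inv_eq_right_inv hggt
  -- trace of cube of A
  have htrA : -Real.cos (3 * t) / Real.sqrt 6 = (A * A * A).trace := by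
    rw [← trace_gam_cube t, hgamt, ← hgA, trace_cube_conj A g hggt]
  refine ⟨t, ⟨htmem, g, hggt, hgdet, by rw [hginv, hgA, hgamt]⟩, ?_⟩
  rintro s ⟨hsmem, g', hg't, hg'det, hg'conj⟩
  have hg'inv : g'⁻¹ = g'ᵀ := Matrix.inv_eq_right_inv hg't
  rw [hg'inv] at hg'conj
  have htrA' : -Real.cos (3 * s) / Real.sqrt 6 = (A * A * A).trace := by
    rw [← trace_gam_cube s, ← hg'conj, trace_cube_conj A g' hg't]
  have h6 : Real.sqrt 6 ≠ 0 := by positivity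
  have hcos : Real.cos (3 * s) = Real.cos (3 * t) := by
    field_simp at htrA htrA'
    linarith [htrA, htrA']
  have hpi := Real.pi_pos
  have : 3 * s = 3 * t := by
    apply Real.injOn_cos ⟨by linarith [hsmem.1], by linarith [hsmem.2]⟩
      ⟨by linarith [htmem.1], by linarith [htmem.2]⟩ hcos
  linarith
end

section
/- The stabilizer of e₁ = diag(1,1,−2)/√6 under the conjugation action of SO(3) on V is exactly the group of block matrices of the form B ⊕ (det B) with B ∈ O(2) acting on the first two coordinates, i.e. {g ∈ SO(3) : g e₁ g⁻¹ = e₁} = { B ⊕ (det B) : B ∈ O(2) }. -/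
open Real Matrix

lemma aux_orth (a b c d e : ℝ) (h00 : a * a + b * b = 1) (h01 : a * c + b * d = 0)
    (h11 : c * c + d * d = 1) (he : e * e = 1) :
    !![a, b, 0; c, d, 0; 0, 0, e] * !![a, b, 0; c, d, 0; 0, 0, e]ᵀ = 1 := by
  ext i j
  fin_cases i <;> fin_cases j <;>
    simp [Matrix.mul_apply, Fin.sum_univ_three, Matrix.one_apply, Matrix.transpose_apply,
      Matrix.vecHead, Matrix.vecTail] <;> linarith

lemma aux_conj (a b c d e : ℝ) (h00 : a * a + b * b = 1) (h01 : a * c + b * d = 0)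
    (h11 : c * c + d * d = 1) (he : e * e = 1) :
    !![a, b, 0; c, d, 0; 0, 0, e] * !![(1:ℝ), 0, 0; 0, 1, 0; 0, 0, -2] *
      !![a, b, 0; c, d, 0; 0, 0, e]ᵀ = !![(1:ℝ), 0, 0; 0, 1, 0; 0, 0, -2] := by
  ext i j
  fin_cases i <;> fin_cases j <;>
    simp [Matrix.mul_apply, Fin.sum_univ_three, Matrix.transpose_apply,
      Matrix.vecHead, Matrix.vecTail] <;> nlinarith [h00, h01, h11, he]

lemma aux_det (a b c d e : ℝ) (he : e * (a * d - b * c) = 1) :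
    (!![a, b, 0; c, d, 0; 0, 0, e]).det = 1 := by
  rw [Matrix.det_fin_three]
  simp [Matrix.vecHead, Matrix.vecTail]
  nlinarith [he]

/-- The stabilizer of `e₁` under the conjugation action of `SO(3)` is exactly
`{ B ⊕ (det B) : B ∈ O(2) }`. -/
theorem stabilizer_e1_eq_O2 :
    {g : Matrix (Fin 3) (Fin 3) ℝ | g * gᵀ = 1 ∧ g.det = 1 ∧ g * e1 * g⁻¹ = e1} =
    {g : Matrix (Fin 3) (Fin 3) ℝ | ∃ B : Matrix (Fin 2) (Fin 2) ℝ, B * Bᵀ = 1 ∧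
      g = !![B 0 0, B 0 1, 0; B 1 0, B 1 1, 0; 0, 0, B.det]} := by
  have hc : (1 / Real.sqrt 6 : ℝ) ≠ 0 := by positivity
  ext g
  simp only [Set.mem_setOf_eq]
  constructor
  · rintro ⟨h1, h2, h3⟩
    have h1' : gᵀ * g = 1 := mul_eq_one_comm.mp h1
    have hinv : g⁻¹ = gᵀ := inv_eq_right_inv h1
    rw [hinv] at h3
    have hcomm : g * e1 = e1 * g := by
      calc g * e1 = g * e1 * gᵀ * g := by rw [mul_assoc, h1', mul_one]
        _ = e1 * g := by rw [h3]
    rw [show e1 = (1 / Real.sqrt 6) • !![1, 0, 0; 0, 1, 0; 0, 0, -2] from rfl,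
      Matrix.mul_smul, Matrix.smul_mul] at hcomm
    have hD : g * !![(1:ℝ), 0, 0; 0, 1, 0; 0, 0, -2] =
        !![(1:ℝ), 0, 0; 0, 1, 0; 0, 0, -2] * g :=
      smul_right_injective _ hc hcomm
    have e02 := congr_fun (congr_fun hD 0) 2
    have e12 := congr_fun (congr_fun hD 1) 2
    have e20 := congr_fun (congr_fun hD 2) 0
    have e21 := congr_fun (congr_fun hD 2) 1
    simp [Matrix.mul_apply, Fin.sum_univ_three, Matrix.vecHead, Matrix.vecTail]
      at e02 e12 e20 e21
    have g02 : g 0 2 = 0 := by linarith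
    have g12 : g 1 2 = 0 := by linarith
    have g20 : g 2 0 = 0 := by linarith
    have g21 : g 2 1 = 0 := by linarith
    have o00 := congr_fun (congr_fun h1 0) 0
    have o01 := congr_fun (congr_fun h1 0) 1
    have o10 := congr_fun (congr_fun h1 1) 0
    have o11 := congr_fun (congr_fun h1 1) 1
    have o22 := congr_fun (congr_fun h1' 2) 2
    simp [Matrix.mul_apply, Fin.sum_univ_three, Matrix.one_apply, Matrix.transpose_apply,
      g02, g12, g20, g21] at o00 o01 o10 o11 o22
    rw [Matrix.det_fin_three] at h2
    refine ⟨!![g 0 0, g 0 1; g 1 0, g 1 1], ?_, ?_⟩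
    · ext i j
      fin_cases i <;> fin_cases j <;>
        simp [Matrix.mul_apply, Fin.sum_univ_two, Matrix.one_apply, Matrix.transpose_apply,
          Matrix.vecHead, Matrix.vecTail] <;> linarith
    · have hdet : (!![g 0 0, g 0 1; g 1 0, g 1 1]).det = g 0 0 * g 1 1 - g 0 1 * g 1 0 := by
        simp [Matrix.det_fin_two]
      have g22 : g 2 2 = g 0 0 * g 1 1 - g 0 1 * g 1 0 := by
        rw [g02, g12, g20, g21] at h2
        ring_nf at h2
        nlinarith [h2, o22, sq_nonneg (g 2 2)]
      ext i j
      fin_cases i <;> fin_cases j <;>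
        simp [hdet, g02, g12, g20, g21, g22, Matrix.vecHead, Matrix.vecTail]
  · rintro ⟨B, hB, rfl⟩
    have h00 := congr_fun (congr_fun hB 0) 0
    have h01 := congr_fun (congr_fun hB 0) 1
    have h11 := congr_fun (congr_fun hB 1) 1
    simp [Matrix.mul_apply, Fin.sum_univ_two, Matrix.one_apply, Matrix.transpose_apply]
      at h00 h01 h11
    have hdet : B.det = B 0 0 * B 1 1 - B 0 1 * B 1 0 := Matrix.det_fin_two B
    have hd2 : B.det * B.det = 1 := by
      have := congrArg Matrix.det hB
      simpa [Matrix.det_mul, Matrix.det_transpose] using this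
    have hg1 := aux_orth (B 0 0) (B 0 1) (B 1 0) (B 1 1) B.det h00 h01 h11 hd2
    refine ⟨hg1, aux_det _ _ _ _ _ (by rw [← hdet]; exact hd2), ?_⟩
    rw [inv_eq_right_inv hg1]
    rw [show e1 = (1 / Real.sqrt 6) • !![1, 0, 0; 0, 1, 0; 0, 0, -2] from rfl,
      Matrix.mul_smul, Matrix.smul_mul]
    rw [aux_conj (B 0 0) (B 0 1) (B 1 0) (B 1 1) B.det h00 h01 h11 hd2]
end

section
/- For every t with 0 < t < π/3, the stabilizer of γ(t) under the conjugation action of SO(3) is exactly the group of diagonal matrices in SO(3) with entries ±1, namely {diag(1,1,1), diag(1,−1,−1), diag(−1,1,−1), diag(−1,−1,1)} (a group isomorphic to ℤ₂ × ℤ₂). -/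
open Real Matrix

noncomputable def dvec (t : ℝ) : Fin 3 → ℝ :=
  ![Real.cos t / Real.sqrt 6 + Real.sin t / Real.sqrt 2,
    Real.cos t / Real.sqrt 6 - Real.sin t / Real.sqrt 2,
    -2 * Real.cos t / Real.sqrt 6]

lemma gam_diag (t : ℝ) : gam t = Matrix.diagonal (dvec t) := by
  ext i j
  fin_cases i <;> fin_cases j <;>
    simp [gam, e1, e2, dvec, Matrix.diagonal, Matrix.vecHead, Matrix.vecTail] <;> ring

lemma stab_of_diag (t : ℝ) (d : Fin 3 → ℝ) (h : ∀ i, d i * d i = 1)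
    (hdet : d 0 * d 1 * d 2 = 1) :
    (Matrix.diagonal d) * (Matrix.diagonal d)ᵀ = 1 ∧ (Matrix.diagonal d).det = 1 ∧
    (Matrix.diagonal d) * gam t * (Matrix.diagonal d)⁻¹ = gam t := by
  have hd1 : (fun i => d i * d i) = (1 : Fin 3 → ℝ) := funext h
  have hdd : Matrix.diagonal d * Matrix.diagonal d = 1 := by
    rw [Matrix.diagonal_mul_diagonal, hd1]; exact Matrix.diagonal_one
  have horth : Matrix.diagonal d * (Matrix.diagonal d)ᵀ = 1 := by
    rwa [Matrix.diagonal_transpose]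
  refine ⟨horth, ?_, ?_⟩
  · rw [Matrix.det_diagonal, Fin.prod_univ_three]; exact hdet
  · have hinv : (Matrix.diagonal d)⁻¹ = Matrix.diagonal d :=
      Matrix.inv_eq_right_inv hdd
    rw [hinv, gam_diag, Matrix.diagonal_mul_diagonal, Matrix.diagonal_mul_diagonal]
    have : (fun i => d i * dvec t i * d i) = dvec t := by
      funext i
      linear_combination (dvec t i) * h i
    rw [this]

lemma dvec_injective (t : ℝ) (h0 : 0 < t) (h1 : t < π / 3) :
    Function.Injective (dvec t) := by
  have hpi : (0:ℝ) < π := Real.pi_pos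
  have hsin : 0 < Real.sin t := Real.sin_pos_of_pos_of_lt_pi h0 (by linarith)
  have hcos : 0 < Real.cos t := Real.cos_pos_of_mem_Ioo ⟨by linarith, by linarith⟩
  have key : 0 < Real.sin (π/3 - t) :=
    Real.sin_pos_of_pos_of_lt_pi (by linarith) (by linarith)
  rw [Real.sin_sub, Real.sin_pi_div_three, Real.cos_pi_div_three] at key
  have s2 : (0:ℝ) < Real.sqrt 2 := by positivity
  have s3 : (0:ℝ) < Real.sqrt 3 := by positivity
  have s6 : (0:ℝ) < Real.sqrt 6 := by positivity
  have s2q : Real.sqrt 2 ^ 2 = 2 := Real.sq_sqrt (by norm_num)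
  have s3q : Real.sqrt 3 ^ 2 = 3 := Real.sq_sqrt (by norm_num)
  have h6 : Real.sqrt 6 = Real.sqrt 2 * Real.sqrt 3 := by
    rw [show (6:ℝ) = 2 * 3 by norm_num, Real.sqrt_mul (by norm_num)]
  -- key inequalities
  have h01 : dvec t 1 < dvec t 0 := by
    simp only [dvec]
    norm_num
    have := div_pos hsin s2; linarith
  have h12 : dvec t 2 < dvec t 1 := by
    have hnum : 0 < 3 * Real.cos t - Real.sqrt 3 * Real.sin t := by
      nlinarith [key, s3q, s3]
    have : dvec t 1 - dvec t 2 = (3 * Real.cos t - Real.sqrt 3 * Real.sin t) / Real.sqrt 6 := by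
      simp only [dvec, Matrix.cons_val_two, Matrix.vecHead, Matrix.vecTail]
      norm_num
      rw [h6]
      field_simp
      ring_nf
    nlinarith [div_pos hnum s6]
  have h02 : dvec t 2 < dvec t 0 := lt_trans h12 h01
  intro i j hij
  fin_cases i <;> fin_cases j <;> simp_all

/-- For `0 < t < π/3` the stabilizer of `γ(t)` in `SO(3)` is the group of diagonal
matrices with entries `±1` and determinant `1`, isomorphic to `ℤ₂ × ℤ₂`. -/
theorem principal_isotropy_group (t : ℝ) (h0 : 0 < t) (h1 : t < π / 3) :
    {g : Matrix (Fin 3) (Fin 3) ℝ | g * gᵀ = 1 ∧ g.det = 1 ∧ g * gam t * g⁻¹ = gam t} =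
    {Matrix.diagonal ![1, 1, 1], Matrix.diagonal ![1, -1, -1],
      Matrix.diagonal ![-1, 1, -1], Matrix.diagonal ![-1, -1, 1]} := by
  have hinj := dvec_injective t h0 h1
  ext g
  simp only [Set.mem_setOf_eq, Set.mem_insert_iff, Set.mem_singleton_iff]
  constructor
  · rintro ⟨horth, hdet, hcomm⟩
    have hinv : g⁻¹ = gᵀ := Matrix.inv_eq_right_inv horth
    have horth' : gᵀ * g = 1 := mul_eq_one_comm.mp horth
    rw [gam_diag, hinv] at hcomm
    have hcomm' : g * Matrix.diagonal (dvec t) = Matrix.diagonal (dvec t) * g := by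
      calc g * Matrix.diagonal (dvec t)
          = g * Matrix.diagonal (dvec t) * (gᵀ * g) := by rw [horth', mul_one]
        _ = (g * Matrix.diagonal (dvec t) * gᵀ) * g := by rw [mul_assoc, mul_assoc, mul_assoc]
        _ = Matrix.diagonal (dvec t) * g := by rw [hcomm]
    have hoff : ∀ i j, i ≠ j → g i j = 0 := by
      intro i j hij
      have h1 := congrArg (fun M => M i j) hcomm'
      simp only [Matrix.mul_diagonal, Matrix.diagonal_mul] at h1
      have h2 : g i j * (dvec t j - dvec t i) = 0 := by linear_combination h1
      rcases mul_eq_zero.mp h2 with h | h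
      · exact h
      · exact absurd (hinj (by linarith : dvec t j = dvec t i)) (Ne.symm hij)
    have hdiag : g = Matrix.diagonal (fun i => g i i) := by
      ext i j
      by_cases h : i = j
      · subst h; simp
      · rw [Matrix.diagonal_apply_ne _ h]; exact hoff i j h
    have hsq : ∀ i, g i i = 1 ∨ g i i = -1 := by
      intro i
      have h2 : (g * gᵀ) i i = (1 : Matrix (Fin 3) (Fin 3) ℝ) i i := by rw [horth]
      rw [hdiag] at h2
      simp only [Matrix.diagonal_transpose, Matrix.diagonal_mul_diagonal,
        Matrix.diagonal_apply_eq, Matrix.one_apply_eq] at h2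
      exact mul_self_eq_one_iff.mp h2
    rw [hdiag, Matrix.det_diagonal, Fin.prod_univ_three] at hdet
    rcases hsq 0 with ha | ha <;> rcases hsq 1 with hb | hb <;> rcases hsq 2 with hc | hc <;>
      rw [ha, hb, hc] at hdet <;> norm_num at hdet <;>
      [left; (right;left); (right;right;left); (right;right;right)] <;>
      · rw [hdiag]; apply congrArg Matrix.diagonal; funext i; fin_cases i <;> simp [ha, hb, hc]
  · rintro (rfl | rfl | rfl | rfl) <;>
      refine stab_of_diag t _ (fun i => ?_) (by norm_num [Matrix.cons_val_two, Matrix.vecHead, Matrix.vecTail]) <;>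
      fin_cases i <;> norm_num
end

section
/- For 0 < t < π/4, the set of g ∈ SO(3) such that g·(cos t, i sin t, 0) is a complex scalar multiple of (cos t, i sin t, 0) equals {I, diag(−1,−1,1)}. For t = π/4, the set of g ∈ SO(3) such that g·(cos t, i sin t, 0) is a complex scalar multiple of (cos t, i sin t, 0) equals the group of block matrices R ⊕ (1), where R ∈ SO(2) rotates the first two coordinates and the (3,3) entry is 1. (These are the isotropy groups of the cohomogeneity one action of SO(3) on ℂP² along the normal geodesic [cos t : i sin t : 0].) -/
set_option maxHeartbeats 1000000

open Real Matrix

/-- the point `(cos t, i sin t, 0) ∈ ℂ³` on the normal geodesic in `ℂP²` -/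
noncomputable def pt (t : ℝ) : Fin 3 → ℂ :=
  ![(Real.cos t : ℂ), Complex.I * Real.sin t, 0]

private lemma key (t : ℝ) (hC : 0 < Real.cos t) (hS : 0 < Real.sin t)
    (g : Matrix (Fin 3) (Fin 3) ℝ) (c : ℂ)
    (horth : g * gᵀ = 1) (hdet : g.det = 1)
    (hvec : (g.map Complex.ofReal).mulVec (pt t) = c • pt t) :
    g 0 0 = c.re ∧ g 1 1 = c.re ∧
    g 0 1 * Real.sin t = c.im * Real.cos t ∧
    g 1 0 * Real.cos t = -(c.im * Real.sin t) ∧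
    g 0 2 = 0 ∧ g 1 2 = 0 ∧ g 2 0 = 0 ∧ g 2 1 = 0 ∧
    (g 0 0)^2 + (g 0 1)^2 = 1 ∧ (g 1 0)^2 + (g 1 1)^2 = 1 ∧
    g 2 2 * (g 0 0 * g 1 1 - g 0 1 * g 1 0) = 1 := by
  have h0 := congrFun hvec 0
  have h1 := congrFun hvec 1
  have h2 := congrFun hvec 2
  simp only [Matrix.mulVec, dotProduct, Fin.sum_univ_three, pt, Matrix.map_apply,
    Matrix.cons_val_zero, Matrix.cons_val_one, Matrix.head_cons, Pi.smul_apply,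
    Matrix.cons_val_two, Matrix.tail_cons, smul_eq_mul, mul_zero, add_zero, Complex.ext_iff,
    Complex.add_re, Complex.add_im, Complex.mul_re, Complex.mul_im, Complex.ofReal_re,
    Complex.ofReal_im, Complex.I_re, Complex.I_im, Complex.zero_re, Complex.zero_im] at h0 h1 h2
  obtain ⟨h0r, h0i⟩ := h0
  obtain ⟨h1r, h1i⟩ := h1
  obtain ⟨h2r, h2i⟩ := h2
  ring_nf at h0r h0i h1r h1i h2r h2i
  have h20 : g 2 0 = 0 := by
    rcases mul_eq_zero.mp h2r with h | h
    · exact absurd h hC.ne'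
    · exact h
  have h21 : g 2 1 = 0 := by
    rcases mul_eq_zero.mp h2i with h | h
    · exact absurd h hS.ne'
    · exact h
  have h00 : g 0 0 = c.re :=
    mul_left_cancel₀ hC.ne' (by linear_combination h0r)
  have h11 : g 1 1 = c.re :=
    mul_left_cancel₀ hS.ne' (by linear_combination h1i)
  have htg := mul_eq_one_comm.mp horth
  have o22 := congrFun (congrFun horth 2) 2
  have c22 := congrFun (congrFun htg 2) 2
  simp only [Matrix.mul_apply, Fin.sum_univ_three, Matrix.transpose_apply,
    Matrix.one_apply_eq] at o22 c22
  have hg22 : (g 2 2)^2 = 1 := by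
    linear_combination o22 - g 2 0 * h20 - g 2 1 * h21
  have h02 : g 0 2 = 0 := by nlinarith [c22, sq_nonneg (g 0 2), sq_nonneg (g 1 2)]
  have h12 : g 1 2 = 0 := by nlinarith [c22, sq_nonneg (g 0 2), sq_nonneg (g 1 2)]
  have o00 := congrFun (congrFun horth 0) 0
  have o11 := congrFun (congrFun horth 1) 1
  simp only [Matrix.mul_apply, Fin.sum_univ_three, Matrix.transpose_apply,
    Matrix.one_apply_eq] at o00 o11
  rw [Matrix.det_fin_three] at hdet
  refine ⟨h00, h11, by linear_combination h0i, by linear_combination h1r,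
    h02, h12, h20, h21,
    by linear_combination o00 - g 0 2 * h02,
    by linear_combination o11 - g 1 2 * h12, ?_⟩
  rw [h02, h12, h20, h21] at hdet
  linear_combination hdet

/-- The isotropy groups of the cohomogeneity one action of `SO(3) ⊂ SU(3)` on `ℂP²` along
the normal geodesic `[cos t : i sin t : 0]`:  for `0 < t < π/4` the stabilizer is
`{I, diag(-1,-1,1)}`, and at `t = π/4` it is `SO(2) ⊕ (1)`. -/
theorem isotropy_groups_CP2 :
    (∀ t : ℝ, 0 < t → t < π / 4 →
      {g : Matrix (Fin 3) (Fin 3) ℝ | (g * gᵀ = 1 ∧ g.det = 1) ∧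
          ∃ c : ℂ, (g.map Complex.ofReal).mulVec (pt t) = c • pt t} =
        {1, Matrix.diagonal ![-1, -1, 1]}) ∧
    ({g : Matrix (Fin 3) (Fin 3) ℝ | (g * gᵀ = 1 ∧ g.det = 1) ∧
          ∃ c : ℂ, (g.map Complex.ofReal).mulVec (pt (π / 4)) = c • pt (π / 4)} =
        {g : Matrix (Fin 3) (Fin 3) ℝ | ∃ R : Matrix (Fin 2) (Fin 2) ℝ,
          R * Rᵀ = 1 ∧ R.det = 1 ∧
          g = !![R 0 0, R 0 1, 0; R 1 0, R 1 1, 0; 0, 0, 1]}) := by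
  constructor
  · -- 0 < t < π/4 case
    intro t ht ht'
    have hpi : (0:ℝ) < π := Real.pi_pos
    have htlt : t < π / 2 := by linarith [ht', hpi]
    have hC : 0 < Real.cos t := Real.cos_pos_of_mem_Ioo ⟨by linarith, htlt⟩
    have hS : 0 < Real.sin t := Real.sin_pos_of_pos_of_lt_pi ht (by linarith)
    have hSC : Real.sin t < Real.cos t := by
      rw [← Real.cos_pi_div_two_sub]
      exact Real.cos_lt_cos_of_nonneg_of_le_pi (le_of_lt ht) (by linarith) (by linarith)
    ext g
    simp only [Set.mem_setOf_eq, Set.mem_insert_iff, Set.mem_singleton_iff]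
    constructor
    · rintro ⟨⟨horth, hdet⟩, c, hvec⟩
      obtain ⟨h00, h11, h01, h10, h02, h12, h20, h21, hr0, hr1, hminor⟩ :=
        key t hC hS g c horth hdet hvec
      -- derive c.im = 0 and g 0 1 = 0
      have e1 : (g 0 1)^2 * (Real.sin t)^2 = c.im^2 * (Real.cos t)^2 := by
        linear_combination (g 0 1 * Real.sin t + c.im * Real.cos t) * h01
      have e2 : (g 1 0)^2 * (Real.cos t)^2 = c.im^2 * (Real.sin t)^2 := by
        linear_combination (g 1 0 * Real.cos t - c.im * Real.sin t) * h10
      have e3 : (g 0 1)^2 = (g 1 0)^2 := by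
        have hr0' : c.re^2 + (g 0 1)^2 = 1 := by rw [h00] at hr0; exact hr0
        have hr1' : (g 1 0)^2 + c.re^2 = 1 := by rw [h11] at hr1; exact hr1
        linarith
      have hpyth := Real.sin_sq_add_cos_sq t
      have hq : (g 0 1)^2 = c.im^2 := by
        linear_combination e1 + e2 + (Real.cos t)^2 * e3 - ((g 0 1)^2 - c.im^2) * hpyth
      have hC2S2 : (Real.sin t)^2 < (Real.cos t)^2 := by nlinarith [hSC, hS]
      have hcim2 : c.im^2 * ((Real.cos t)^2 - (Real.sin t)^2) = 0 := by
        linear_combination (Real.sin t)^2 * hq - e1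
      have hcim : c.im = 0 := by
        rcases mul_eq_zero.mp hcim2 with h | h
        · exact pow_eq_zero_iff (two_ne_zero) |>.mp h
        · exfalso; linarith
      have hb : g 0 1 = 0 := by
        have h' : (g 0 1)^2 = 0 := by rw [hq, hcim]; ring
        exact pow_eq_zero_iff (two_ne_zero) |>.mp h'
      have hb' : g 1 0 = 0 := by
        have h' : g 1 0 * Real.cos t = 0 := by rw [h10, hcim]; ring
        rcases mul_eq_zero.mp h' with h | h
        · exact h
        · exact absurd h hC.ne'
      have ha2 : (g 0 0)^2 = 1 := by
        have := hr0; rw [hb] at this; linarith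
      have h1100 : g 1 1 = g 0 0 := by rw [h00, h11]
      have hg22 : g 2 2 = 1 := by
        linear_combination hminor - g 2 2 * g 0 0 * h1100 - g 2 2 * ha2 + g 2 2 * g 1 0 * hb
      rcases mul_self_eq_one_iff.mp (by linear_combination ha2 : g 0 0 * g 0 0 = 1) with ha | ha
      · left
        have h11' : g 1 1 = 1 := by rw [h1100, ha]
        ext i j
        fin_cases i <;> fin_cases j <;>
          simp_all [Matrix.one_apply]
      · right
        have h11' : g 1 1 = -1 := by rw [h1100, ha]
        ext i j
        fin_cases i <;> fin_cases j <;>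
          simp_all [Matrix.diagonal]
    · rintro (rfl | rfl)
      · exact ⟨⟨by simp, by simp⟩, 1, by simp⟩
      · refine ⟨⟨?_, ?_⟩, -1, ?_⟩
        · ext i j
          fin_cases i <;> fin_cases j <;>
            norm_num [Matrix.mul_apply, Fin.sum_univ_three, Matrix.transpose_apply,
              Matrix.diagonal, Matrix.one_apply, Fin.ext_iff]
        · rw [Matrix.det_diagonal, Fin.prod_univ_three]; norm_num [Matrix.cons_val_two, Matrix.vecHead, Matrix.vecTail]
        · funext i
          fin_cases i <;>
            simp [Matrix.mulVec, dotProduct, Fin.sum_univ_three, pt,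
              Matrix.map_apply, Matrix.diagonal] <;> ring
  · -- t = π/4 case
    have hpi : (0:ℝ) < π := Real.pi_pos
    have hC : 0 < Real.cos (π/4) := by rw [Real.cos_pi_div_four]; positivity
    have hS : 0 < Real.sin (π/4) := by rw [Real.sin_pi_div_four]; positivity
    have hcs : Real.cos (π/4) = Real.sin (π/4) := by
      rw [Real.cos_pi_div_four, Real.sin_pi_div_four]
    ext g
    simp only [Set.mem_setOf_eq]
    constructor
    · rintro ⟨⟨horth, hdet⟩, c, hvec⟩
      obtain ⟨h00, h11, h01, h10, h02, h12, h20, h21, hr0, hr1, hminor⟩ :=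
        key (π/4) hC hS g c horth hdet hvec
      have hb : g 0 1 = c.im := by
        apply mul_right_cancel₀ hS.ne'
        rw [h01, ← hcs]
      have hb' : g 1 0 = -c.im := by
        apply mul_right_cancel₀ hC.ne'
        rw [h10, hcs]; ring
      have hab : c.re^2 + c.im^2 = 1 := by rw [h00, hb] at hr0; exact hr0
      rw [h00, h11, hb, hb'] at hminor
      have hg22 : g 2 2 = 1 := by linear_combination hminor - g 2 2 * hab
      have hg : g = !![c.re, c.im, 0; -c.im, c.re, 0; 0, 0, 1] := by
        ext i j
        fin_cases i <;> fin_cases j <;> simp_all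
      refine ⟨!![c.re, c.im; -c.im, c.re], ?_, ?_, ?_⟩
      · ext i j
        fin_cases i <;> fin_cases j <;>
          simp [Matrix.mul_apply, Fin.sum_univ_two, Matrix.transpose_apply,
            Matrix.one_apply, Matrix.vecHead, Matrix.vecTail, Matrix.cons_val_zero,
            Matrix.cons_val_one, Matrix.head_cons, Fin.ext_iff] <;>
          first
            | linear_combination hab
            | ring
      · simp [Matrix.det_fin_two]
        linear_combination hab
      · rw [hg]
        norm_num
    · rintro ⟨R, hR, hdR, rfl⟩
      have e00 := congrFun (congrFun hR 0) 0
      have e01 := congrFun (congrFun hR 0) 1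
      have e11 := congrFun (congrFun hR 1) 1
      simp [Matrix.mul_apply, Fin.sum_univ_two, Matrix.transpose_apply,
        Matrix.one_apply] at e00 e01 e11
      rw [Matrix.det_fin_two] at hdR
      have hr10 : R 1 0 = -R 0 1 := by
        linear_combination (-(R 1 0))*e00 + (R 0 0)*e01 + (-(R 0 1))*hdR
      have hr11 : R 1 1 = R 0 0 := by
        linear_combination (-(R 1 1))*e00 + (R 0 1)*e01 + (R 0 0)*hdR
      refine ⟨⟨?_, ?_⟩, R 0 0 + R 0 1 * Complex.I, ?_⟩
      · ext i j
        fin_cases i <;> fin_cases j <;>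
          simp [Matrix.mul_apply, Fin.sum_univ_three, Matrix.transpose_apply,
            Matrix.one_apply, Matrix.vecHead, Matrix.vecTail, Matrix.cons_val_zero,
            Matrix.cons_val_one, Matrix.head_cons, Fin.ext_iff] <;>
          first
            | linear_combination e00
            | linear_combination e01
            | linear_combination e11
            | ring
      · rw [Matrix.det_fin_three]
        norm_num [Matrix.cons_val_two, Matrix.vecHead, Matrix.vecTail]
        linear_combination hdR
      · funext i
        fin_cases i
        · simp [Matrix.mulVec, dotProduct, Fin.sum_univ_three, pt,
            Matrix.map_apply, Real.cos_pi_div_four, Real.sin_pi_div_four, hr10, hr11]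
          push_cast
          ring
        · simp [Matrix.mulVec, dotProduct, Fin.sum_univ_three, pt,
            Matrix.map_apply, Real.cos_pi_div_four, Real.sin_pi_div_four, hr10, hr11]
          push_cast
          linear_combination
            (-(Complex.ofReal (R 0 1) * Complex.ofReal (Real.sqrt 2) / 2)) * Complex.I_sq
        · simp [Matrix.mulVec, dotProduct, Fin.sum_univ_three, pt,
            Matrix.map_apply, Real.cos_pi_div_four, Real.sin_pi_div_four, hr10, hr11]
end

section
/- For every real t and every skew-symmetric 3×3 real matrix E, one has ⟨[E, γ(t)], γ'(t)⟩ = 0, where γ'(t) = −sin(t)·e₁ + cos(t)·e₂. (That is, the great circle γ in the unit sphere of V is orthogonal to every SO(3)-orbit of the conjugation action.) -/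
open Real Matrix

/-- `γ'(t) = -sin t · e₁ + cos t · e₂` -/
noncomputable def gam' (t : ℝ) : Matrix (Fin 3) (Fin 3) ℝ :=
  (-Real.sin t) • e1 + Real.cos t • e2

/-- The great circle `γ` in the unit sphere of `V` is orthogonal to every `SO(3)`-orbit of
the conjugation action: the tangent vectors `[E, γ(t)]` to the orbit are orthogonal, with
respect to `⟨A,B⟩ = tr(AB)`, to `γ'(t)` for every skew-symmetric `E`. -/
theorem geodesic_orthogonal_to_orbits (t : ℝ) (E : Matrix (Fin 3) (Fin 3) ℝ)
    (hE : Eᵀ = -E) :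
    ((E * gam t - gam t * E) * gam' t).trace = 0 := by
  simp [gam, gam', e1, e2, trace, Matrix.mul_apply, Fin.sum_univ_three, diag,
    Matrix.add_apply, Matrix.sub_apply, Matrix.smul_apply, Matrix.vecMul, dotProduct]
  ring
end
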